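/- arXiv:2105.06246 — 2 statements merged into one kernel-verified Lean document; each statement's English description precedes it below -/
import Mathlib

section
/- Let n be a positive natural number, let Z be a measurable space, let π be a probability measure on Z (the prior), let μ : Z → ℝⁿ be measurable, and let σ > 0. Define the Gaussian likelihood density f(x,z) = (2πσ²)^{-n/2} · exp(-‖x - μ(z)‖²/(2σ²)) for x ∈ ℝⁿ (Euclidean norm), and the marginal density p(x) = ∫ f(x,z) dπ(z). Then for every x ∈ ℝⁿ we have 0 < p(x), the function z ↦ ‖μ(z)‖ · f(x,z) is π-integrable, the function x ↦ log p(x) is differentiable at every point, and its gradient satisfies ∇ log p(x) = σ^{-2} · ( (∫ μ(z) · f(x,z) dπ(z)) / p(x) − x ). (Proposition 1: the gradient of the VAE log-marginal density is proportional to the average posterior reconstruction minus x.) -/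
/-!
The Gaussian kernel `f(x, z) = c exp(-‖x - μ z‖² / (2σ²))` and its gradient in `x`,
`σ⁻² f(x, z) (μ z - x)`, are bounded uniformly in `x` and `z`, because
`s exp(-s² / (2σ²)) ≤ σ`. Dominated convergence therefore lets us differentiate
`p(x) = ∫ f(x, z) dπ(z)` under the integral sign, giving
`∇ p(x) = σ⁻² (∫ f(x, z) μ z dπ(z) - p(x) x)`, and dividing by `p(x) > 0` gives `∇ log p`.
The normalizing constant `c` cancels, so it stays a parameter throughout.
-/

open MeasureTheory InnerProductSpace

lemma mul_exp_neg_sq_div_le {σ : ℝ} (hσ : 0 < σ) (s : ℝ) :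
    s * Real.exp (-s ^ 2 / (2 * σ ^ 2)) ≤ σ := by
  have key : s ≤ σ * Real.exp (s ^ 2 / (2 * σ ^ 2)) :=
    calc s ≤ σ * (s ^ 2 / (2 * σ ^ 2) + 1) := by
          rw [← sub_nonneg]
          have : σ * (s ^ 2 / (2 * σ ^ 2) + 1) - s = ((s - σ) ^ 2 + σ ^ 2) / (2 * σ) := by
            field_simp; ring
          rw [this]; positivity
      _ ≤ σ * Real.exp (s ^ 2 / (2 * σ ^ 2)) := by gcongr; exact Real.add_one_le_exp _
  rwa [neg_div, Real.exp_neg, ← div_eq_mul_inv, div_le_iff₀ (Real.exp_pos _)]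

lemma HasGradientAt.log {F : Type*} [NormedAddCommGroup F] [InnerProductSpace ℝ F]
    [CompleteSpace F] {f : F → ℝ} {g x : F} (hf : HasGradientAt f g x) (hx : f x ≠ 0) :
    HasGradientAt (fun y => Real.log (f y)) ((f x)⁻¹ • g) x := by
  rw [hasGradientAt_iff_hasFDerivAt] at hf ⊢
  simpa using hf.log hx

noncomputable def gaussianKernel {E : Type*} [NormedAddCommGroup E] (c σ : ℝ) (m x : E) : ℝ :=
  c * Real.exp (-‖x - m‖ ^ 2 / (2 * σ ^ 2))

section GaussianKernel

variable {E : Type*} [NormedAddCommGroup E] {Z : Type*} [MeasurableSpace Z] {π : Measure Z}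
  {μ : Z → E} {c σ : ℝ}

lemma gaussianKernel_pos (hc : 0 < c) (σ : ℝ) (m x : E) : 0 < gaussianKernel c σ m x := by
  unfold gaussianKernel; positivity

lemma gaussianKernel_nonneg (hc : 0 ≤ c) (σ : ℝ) (m x : E) : 0 ≤ gaussianKernel c σ m x := by
  unfold gaussianKernel; positivity

lemma gaussianKernel_le (hc : 0 ≤ c) (σ : ℝ) (m x : E) : gaussianKernel c σ m x ≤ c :=
  mul_le_of_le_one_right hc <| Real.exp_le_one_iff.2 <| by
    rw [neg_div]; exact neg_nonpos.2 (by positivity)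

lemma norm_sub_mul_gaussianKernel_le (hc : 0 ≤ c) (hσ : 0 < σ) (m x : E) :
    ‖x - m‖ * gaussianKernel c σ m x ≤ c * σ := by
  rw [gaussianKernel, mul_left_comm]
  exact mul_le_mul_of_nonneg_left (mul_exp_neg_sq_div_le hσ _) hc

lemma norm_mul_gaussianKernel_le (hc : 0 ≤ c) (hσ : 0 < σ) (m x : E) :
    ‖m‖ * gaussianKernel c σ m x ≤ c * (‖x‖ + σ) := by
  have hm : ‖m‖ ≤ ‖x‖ + ‖x - m‖ := by simpa using norm_sub_le x (x - m)
  calc ‖m‖ * gaussianKernel c σ m x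
      ≤ ‖x‖ * gaussianKernel c σ m x + ‖x - m‖ * gaussianKernel c σ m x := by
        rw [← add_mul]; exact mul_le_mul_of_nonneg_right hm (gaussianKernel_nonneg hc σ m x)
    _ ≤ ‖x‖ * c + c * σ :=
        add_le_add (mul_le_mul_of_nonneg_left (gaussianKernel_le hc σ m x) (norm_nonneg x))
          (norm_sub_mul_gaussianKernel_le hc hσ m x)
    _ = c * (‖x‖ + σ) := by ring

lemma continuous_gaussianKernel_left (c σ : ℝ) (x : E) :
    Continuous fun m : E => gaussianKernel c σ m x := by
  unfold gaussianKernel; fun_prop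

lemma aestronglyMeasurable_gaussianKernel_comp (hμ : AEStronglyMeasurable μ π) (x : E) :
    AEStronglyMeasurable (fun z => gaussianKernel c σ (μ z) x) π :=
  (continuous_gaussianKernel_left c σ x).comp_aestronglyMeasurable hμ

variable [IsFiniteMeasure π]

lemma integrable_gaussianKernel_comp (hc : 0 ≤ c) (hμ : AEStronglyMeasurable μ π) (x : E) :
    Integrable (fun z => gaussianKernel c σ (μ z) x) π :=
  (integrable_const c).mono' (aestronglyMeasurable_gaussianKernel_comp hμ x) <|
    ae_of_all _ fun z => by
      rw [Real.norm_of_nonneg (gaussianKernel_nonneg hc σ _ x)]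
      exact gaussianKernel_le hc σ _ x

lemma integral_gaussianKernel_comp_pos [NeZero π] (hc : 0 < c) (hμ : AEStronglyMeasurable μ π)
    (x : E) : 0 < ∫ z, gaussianKernel c σ (μ z) x ∂π := by
  rw [integral_pos_iff_support_of_nonneg (fun z => gaussianKernel_nonneg hc.le σ _ x)
    (integrable_gaussianKernel_comp hc.le hμ x)]
  have : Function.support (fun z => gaussianKernel c σ (μ z) x) = Set.univ :=
    Set.eq_univ_of_forall fun z => (gaussianKernel_pos hc σ _ x).ne'
  rw [this]
  exact Measure.measure_univ_pos.2 (NeZero.ne π)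

variable [NormedSpace ℝ E]

lemma integrable_gaussianKernel_smul_comp (hc : 0 ≤ c) (hσ : 0 < σ)
    (hμ : AEStronglyMeasurable μ π) (x : E) :
    Integrable (fun z => gaussianKernel c σ (μ z) x • μ z) π :=
  (integrable_const (c * (‖x‖ + σ))).mono'
    ((aestronglyMeasurable_gaussianKernel_comp hμ x).smul hμ) <| ae_of_all _ fun z => by
      rw [norm_smul, Real.norm_of_nonneg (gaussianKernel_nonneg hc σ _ x), mul_comm]
      exact norm_mul_gaussianKernel_le hc hσ _ x

lemma integrable_norm_mul_gaussianKernel_comp (hc : 0 ≤ c) (hσ : 0 < σ)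
    (hμ : AEStronglyMeasurable μ π) (x : E) :
    Integrable (fun z => ‖μ z‖ * gaussianKernel c σ (μ z) x) π :=
  (integrable_gaussianKernel_smul_comp hc hσ hμ x).norm.congr <| ae_of_all _ fun z => by
    simp only [norm_smul, Real.norm_of_nonneg (gaussianKernel_nonneg hc σ _ x), mul_comm]

lemma integral_gradient_gaussianKernel_comp [CompleteSpace E] (hc : 0 ≤ c) (hσ : 0 < σ)
    (hμ : AEStronglyMeasurable μ π) (x : E) :
    ∫ z, ((σ ^ 2)⁻¹ * gaussianKernel c σ (μ z) x) • (μ z - x) ∂π =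
      (σ ^ 2)⁻¹ • (∫ z, gaussianKernel c σ (μ z) x • μ z ∂π -
        (∫ z, gaussianKernel c σ (μ z) x ∂π) • x) := by
  simp_rw [mul_smul]
  rw [integral_smul]
  congr 1
  simp_rw [smul_sub]
  rw [integral_sub (integrable_gaussianKernel_smul_comp hc hσ hμ x)
    ((integrable_gaussianKernel_comp hc hμ x).smul_const x), integral_smul_const]

end GaussianKernel

section Gradient

variable {E : Type*} [NormedAddCommGroup E] [InnerProductSpace ℝ E] [CompleteSpace E]
  {Z : Type*} [MeasurableSpace Z] {π : Measure Z} {μ : Z → E} {c σ : ℝ}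

lemma hasGradientAt_gaussianKernel (c σ : ℝ) (m x : E) :
    HasGradientAt (gaussianKernel c σ m)
      (((σ ^ 2)⁻¹ * gaussianKernel c σ m x) • (m - x)) x := by
  have hsq : HasFDerivAt (fun y : E => ‖y - m‖ ^ 2) (2 • innerSL ℝ (x - m)) x := by
    simpa using ((hasFDerivAt_id x).sub_const m).norm_sq
  have hexp := ((hsq.mul_const (-(2 * σ ^ 2)⁻¹)).exp).const_mul c
  rw [hasGradientAt_iff_hasFDerivAt]
  refine (hexp.congr_fderiv ?_).congr_of_eventuallyEq (.of_forall fun y => ?_)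
  · ext v
    simp only [mul_inv_rev, mul_neg, map_sub, neg_smul, smul_neg, neg_apply, smul_apply,
      sub_apply, coe_innerSL_apply, nsmul_eq_mul, Nat.cast_ofNat, smul_eq_mul, gaussianKernel,
      map_smul, toDual_apply_apply]
    rw [show -‖x - m‖ ^ 2 / (2 * σ ^ 2) = -(‖x - m‖ ^ 2 * ((σ ^ 2)⁻¹ * 2⁻¹)) by ring]
    ring
  · simp only [gaussianKernel]
    ring_nf

variable [IsFiniteMeasure π]

lemma hasGradientAt_integral_gaussianKernel_comp (hc : 0 ≤ c) (hσ : 0 < σ)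
    (hμ : AEStronglyMeasurable μ π) (x : E) :
    HasGradientAt (fun y => ∫ z, gaussianKernel c σ (μ z) y ∂π)
      ((σ ^ 2)⁻¹ • (∫ z, gaussianKernel c σ (μ z) x • μ z ∂π -
        (∫ z, gaussianKernel c σ (μ z) x ∂π) • x)) x := by
  set v : E → Z → E := fun y z => ((σ ^ 2)⁻¹ * gaussianKernel c σ (μ z) y) • (μ z - y)
  have hv_int : Integrable (v x) π := by
    refine (((integrable_gaussianKernel_smul_comp hc hσ hμ x).sub
      ((integrable_gaussianKernel_comp (σ := σ) hc hμ x).smul_const x)).smul (σ ^ 2)⁻¹).congr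
      (ae_of_all _ fun z => ?_)
    simp only [v, Pi.smul_apply, Pi.sub_apply, mul_smul, smul_sub]
  have hv_le : ∀ y z, ‖toDual ℝ E (v y z)‖ ≤ (σ ^ 2)⁻¹ * (c * σ) := by
    intro y z
    rw [LinearIsometryEquiv.norm_map, norm_smul,
      Real.norm_of_nonneg (by positivity [gaussianKernel_nonneg hc σ (μ z) y]), norm_sub_rev,
      mul_assoc, mul_comm (gaussianKernel _ _ _ _)]
    exact mul_le_mul_of_nonneg_left (norm_sub_mul_gaussianKernel_le hc hσ _ y) (by positivity)
  have hderiv := hasFDerivAt_integral_of_dominated_of_fderiv_le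
    (F' := fun y z => toDual ℝ E (v y z)) Filter.univ_mem
    (.of_forall fun y => aestronglyMeasurable_gaussianKernel_comp hμ y)
    (integrable_gaussianKernel_comp hc hμ x)
    ((toDual ℝ E).continuous.comp_aestronglyMeasurable hv_int.aestronglyMeasurable)
    (ae_of_all _ fun z y _ => hv_le y z) (integrable_const _)
    (ae_of_all _ fun z y _ => hasGradientAt_gaussianKernel c σ (μ z) y)
  have hcomm : ∫ z, toDual ℝ E (v x z) ∂π = toDual ℝ E (∫ z, v x z ∂π) :=
    (toDual ℝ E).toLinearIsometry.integral_comp_comm _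
  rw [hasGradientAt_iff_hasFDerivAt, ← integral_gradient_gaussianKernel_comp hc hσ hμ x]
  rwa [hcomm] at hderiv

lemma hasGradientAt_log_integral_gaussianKernel_comp [NeZero π] (hc : 0 < c) (hσ : 0 < σ)
    (hμ : AEStronglyMeasurable μ π) (x : E) :
    HasGradientAt (fun y => Real.log (∫ z, gaussianKernel c σ (μ z) y ∂π))
      ((σ ^ 2)⁻¹ • ((∫ z, gaussianKernel c σ (μ z) x ∂π)⁻¹ •
        (∫ z, gaussianKernel c σ (μ z) x • μ z ∂π) - x)) x := by
  set P := ∫ z, gaussianKernel c σ (μ z) x ∂π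
  have hP : P ≠ 0 := (integral_gaussianKernel_comp_pos hc hμ x).ne'
  convert (hasGradientAt_integral_gaussianKernel_comp hc.le hσ hμ x).log hP using 1
  rw [smul_comm P⁻¹, smul_sub P⁻¹, smul_smul P⁻¹ P, inv_mul_cancel₀ hP, one_smul]

end Gradient

theorem vae_gradient_log_marginal_general
    (n : ℕ) {Z : Type*} [MeasurableSpace Z]
    (π : Measure Z) [IsProbabilityMeasure π]
    (μ : Z → EuclideanSpace ℝ (Fin n)) (hμ : Measurable μ)
    (σ : ℝ) (hσ : 0 < σ)
    (f : EuclideanSpace ℝ (Fin n) → Z → ℝ)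
    (hf : ∀ x z, f x z =
      (2 * Real.pi * σ ^ 2) ^ (-(n : ℝ) / 2) *
        Real.exp (-‖x - μ z‖ ^ 2 / (2 * σ ^ 2)))
    (p : EuclideanSpace ℝ (Fin n) → ℝ)
    (hp : ∀ x, p x = ∫ z, f x z ∂π) :
    ∀ x : EuclideanSpace ℝ (Fin n),
      0 < p x ∧
      Integrable (fun z => ‖μ z‖ * f x z) π ∧
      DifferentiableAt ℝ (fun y => Real.log (p y)) x ∧
      gradient (fun y => Real.log (p y)) x =
        (σ ^ 2)⁻¹ • ((p x)⁻¹ • (∫ z, f x z • μ z ∂π) - x) := by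
  intro x
  have hC : 0 < (2 * Real.pi * σ ^ 2) ^ (-(n : ℝ) / 2) := by positivity
  obtain rfl : p = fun x => ∫ z, f x z ∂π := funext hp
  obtain rfl : f = fun x z => gaussianKernel _ σ (μ z) x := funext₂ hf
  have hgrad := hasGradientAt_log_integral_gaussianKernel_comp (π := π) hC hσ hμ.aestronglyMeasurable x
  exact ⟨integral_gaussianKernel_comp_pos hC hμ.aestronglyMeasurable x,
    integrable_norm_mul_gaussianKernel_comp hC.le hσ hμ.aestronglyMeasurable x,
    hgrad.differentiableAt, hgrad.gradient⟩

/-- **Proposition 1.** For a VAE with prior `π` on a latent space `Z`, measurable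
decoder mean `μ : Z → ℝⁿ` and isotropic Gaussian likelihood
`f(x,z) = (2πσ²)^{-n/2} exp(-‖x-μ(z)‖²/(2σ²))`, the marginal density
`p(x) = ∫ f(x,z) dπ(z)` is positive, `z ↦ ‖μ(z)‖ f(x,z)` is integrable,
`log p` is differentiable, and `∇ log p(x) = σ⁻² (E_{p(z|x)}[μ(z)] − x)`. -/
theorem vae_gradient_log_marginal
    (n : ℕ) (hn : 0 < n) {Z : Type*} [MeasurableSpace Z]
    (π : Measure Z) [IsProbabilityMeasure π]
    (μ : Z → EuclideanSpace ℝ (Fin n)) (hμ : Measurable μ)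
    (σ : ℝ) (hσ : 0 < σ)
    (f : EuclideanSpace ℝ (Fin n) → Z → ℝ)
    (hf : ∀ x z, f x z =
      (2 * Real.pi * σ ^ 2) ^ (-(n : ℝ) / 2) *
        Real.exp (-‖x - μ z‖ ^ 2 / (2 * σ ^ 2)))
    (p : EuclideanSpace ℝ (Fin n) → ℝ)
    (hp : ∀ x, p x = ∫ z, f x z ∂π) :
    ∀ x : EuclideanSpace ℝ (Fin n),
      0 < p x ∧
      Integrable (fun z => ‖μ z‖ * f x z) π ∧
      DifferentiableAt ℝ (fun y => Real.log (p y)) x ∧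
      gradient (fun y => Real.log (p y)) x =
        (σ ^ 2)⁻¹ • ((p x)⁻¹ • (∫ z, f x z • μ z ∂π) - x) :=
  vae_gradient_log_marginal_general n π μ hμ σ hσ f hf p hp
end

section
/- Let n be a positive natural number, let Z be a measurable space with a probability measure π, let μ : Z → ℝⁿ be measurable, and let σ, τ > 0. Define f(x,z) = (2πσ²)^{-n/2} exp(-‖x-μ(z)‖²/(2σ²)), p(x) = ∫ f(x,z) dπ(z), the posterior mean m(x) = (∫ μ(z) f(x,z) dπ(z))/p(x), and the centered Gaussian kernel g(y) = (2πτ²)^{-n/2} exp(-‖y‖²/(2τ²)) on ℝⁿ. Define the smoothed log-density L_τ(x) = ∫_{ℝⁿ} log p(x-y) · g(y) dy. Assume that for each x₀ there is a neighborhood U of x₀ and a Lebesgue-g-integrable dominating function h with |log p(x-y)| ≤ h(y) and ‖m(x-y) - (x-y)‖/σ² ≤ h(y) for all x ∈ U, y ∈ ℝⁿ. Then L_τ is differentiable and, for every x ∈ ℝⁿ, ∇L_τ(x) = σ^{-2} · ( ∫_{ℝⁿ} m(x-y) g(y) dy − x ). (The gradient of the smoothed VAE log-density equals, up to the factor σ^{-2},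 the Gaussian-averaged posterior reconstruction minus x, using that ∫ y g(y) dy = 0 and ∫ g(y) dy = 1.) -/
/-!
Differentiate under the integral sign twice. For the Gaussian likelihood,
`∇ₓ f(x,z) = σ⁻² f(x,z) (μ(z) - x)`, and `r e^{-r²/(2σ²)} ≤ σ` bounds this uniformly in `z`, so
`∇ log p = σ⁻² (m - id)` (Tweedie's formula). The local domination hypothesis then lets us
differentiate `L_τ(x) = ∫ log p(x - y) g(y) dy` under the integral, giving
`σ⁻² ∫ (m(x - y) - (x - y)) g(y) dy`; since `g` has mass one and mean zero,
`∫ (x - y) g(y) dy = x`.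
-/

open MeasureTheory Filter Topology Module InnerProductSpace

section Gaussian

open Real

variable {E : Type*} [NormedAddCommGroup E] [InnerProductSpace ℝ E]

theorem mul_exp_neg_sq_div_le_sqrt {t r : ℝ} (ht : 0 < t) (hr : 0 ≤ r) :
    r * exp (-r ^ 2 / (2 * t)) ≤ √t := by
  have hexp : (2 : ℕ) * (-r ^ 2 / (2 * t)) = -(r ^ 2 / t) := by field_simp; push_cast; ring
  rw [le_sqrt (by positivity) ht.le, mul_pow, ← exp_nat_mul, hexp, exp_neg, ← div_eq_mul_inv,
    div_le_iff₀ (exp_pos _)]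
  have h := mul_le_mul_of_nonneg_left (add_one_le_exp (r ^ 2 / t)) ht.le
  rw [mul_add, mul_div_cancel₀ _ ht.ne'] at h
  linarith

noncomputable def isoGaussian (s : ℝ) (v : E) : ℝ :=
  (2 * π * s) ^ (-(finrank ℝ E : ℝ) / 2) * exp (-‖v‖ ^ 2 / (2 * s))

variable {s : ℝ}

theorem isoGaussian_pos (hs : 0 < s) (v : E) : 0 < isoGaussian s v := by
  unfold isoGaussian; positivity

theorem isoGaussian_neg (v : E) : isoGaussian s (-v) = isoGaussian s v := by
  simp only [isoGaussian, norm_neg]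

theorem isoGaussian_zero : isoGaussian s (0 : E) = (2 * π * s) ^ (-(finrank ℝ E : ℝ) / 2) := by
  simp [isoGaussian]

theorem isoGaussian_le_isoGaussian_zero (hs : 0 < s) (v : E) :
    isoGaussian s v ≤ isoGaussian s (0 : E) := by
  rw [isoGaussian_zero, isoGaussian]
  exact mul_le_of_le_one_right (by positivity)
    (exp_le_one_iff.2 (div_nonpos_of_nonpos_of_nonneg (neg_nonpos.2 (sq_nonneg _)) (by positivity)))

theorem norm_mul_isoGaussian_le (hs : 0 < s) (v : E) :
    ‖v‖ * isoGaussian s v ≤ √s * isoGaussian s (0 : E) := by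
  rw [isoGaussian_zero, isoGaussian, mul_left_comm, mul_comm √s]
  gcongr
  exact mul_exp_neg_sq_div_le_sqrt hs (norm_nonneg v)

@[fun_prop]
theorem continuous_isoGaussian : Continuous (isoGaussian s : E → ℝ) := by
  unfold isoGaussian; fun_prop

theorem hasGradientAt_isoGaussian_sub [CompleteSpace E] (c x : E) :
    HasGradientAt (fun x => isoGaussian s (x - c)) ((s⁻¹ * isoGaussian s (x - c)) • (c - x)) x := by
  set C := (2 * π * s) ^ (-(finrank ℝ E : ℝ) / 2)
  have hfun : (fun x => isoGaussian s (x - c)) = fun x => C * exp (-‖x - c‖ ^ 2 * (2 * s)⁻¹) := by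
    funext y; simp only [isoGaussian, div_eq_mul_inv, C]
  rw [hasGradientAt_iff_hasFDerivAt, hfun]
  refine ((HasFDerivAt.mul_const ((hasFDerivAt_id x).sub_const c).norm_sq.neg
    (2 * s)⁻¹).exp.const_mul C).congr_fderiv ?_
  ext w
  simp only [div_eq_mul_inv, neg_mul, id_eq, Pi.neg_apply, mul_inv_rev, map_sub,
    ContinuousLinearMap.comp_id, smul_neg, neg_apply, smul_apply, sub_apply, coe_innerSL_apply,
    nsmul_eq_mul, Nat.cast_ofNat, smul_eq_mul, isoGaussian, map_smul,
    InnerProductSpace.toDual_apply_apply, C]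
  ring

theorem isoGaussian_eq_mul_exp (s : ℝ) :
    isoGaussian s = fun v : E =>
      (2 * π * s) ^ (-(finrank ℝ E : ℝ) / 2) * exp (-(2 * s)⁻¹ * ‖v‖ ^ 2) := by
  funext v; rw [isoGaussian]; congr 2; ring

variable [FiniteDimensional ℝ E] [MeasurableSpace E] [BorelSpace E]

theorem integrable_exp_neg_mul_sq_norm {b : ℝ} (hb : 0 < b) :
    Integrable (fun v : E => exp (-b * ‖v‖ ^ 2)) :=
  .of_integral_ne_zero (by rw [GaussianFourier.integral_rexp_neg_mul_sq_norm hb]; positivity)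

theorem integrable_isoGaussian (hs : 0 < s) : Integrable (isoGaussian s : E → ℝ) := by
  rw [isoGaussian_eq_mul_exp]
  exact (integrable_exp_neg_mul_sq_norm (by positivity)).const_mul _

theorem integral_isoGaussian (hs : 0 < s) : ∫ v : E, isoGaussian s v = 1 := by
  rw [isoGaussian_eq_mul_exp, integral_const_mul,
    GaussianFourier.integral_rexp_neg_mul_sq_norm (by positivity), div_inv_eq_mul,
    show π * (2 * s) = 2 * π * s by ring, ← rpow_add (by positivity), neg_div, neg_add_cancel,
    rpow_zero]

theorem integrable_isoGaussian_smul_self (hs : 0 < s) :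
    Integrable (fun v : E => isoGaussian s v • v) := by
  refine ((integrable_exp_neg_mul_sq_norm (b := (2 * (2 * s))⁻¹) (by positivity)).const_mul
    ((2 * π * s) ^ (-(finrank ℝ E : ℝ) / 2) * √(2 * s))).mono'
    (by fun_prop) (ae_of_all _ fun v => ?_)
  have hsplit : exp (-‖v‖ ^ 2 / (2 * s))
      = exp (-‖v‖ ^ 2 / (2 * (2 * s))) * exp (-(2 * (2 * s))⁻¹ * ‖v‖ ^ 2) := by
    rw [← exp_add]; congr 1; field_simp; ring
  rw [norm_smul, norm_of_nonneg (isoGaussian_pos hs v).le, isoGaussian, hsplit]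
  have := mul_exp_neg_sq_div_le_sqrt (by positivity : 0 < 2 * s) (norm_nonneg v)
  calc _ = (2 * π * s) ^ (-(finrank ℝ E : ℝ) / 2) *
        (‖v‖ * exp (-‖v‖ ^ 2 / (2 * (2 * s)))) * exp (-(2 * (2 * s))⁻¹ * ‖v‖ ^ 2) := by ring
    _ ≤ _ := by gcongr

theorem integral_isoGaussian_smul_self : ∫ v : E, isoGaussian s v • v = 0 := by
  have : IsAddTorsionFree E := .of_isTorsionFree ℝ E
  rw [← self_eq_neg, ← integral_neg, ← integral_neg_eq_self]
  simp only [isoGaussian_neg, smul_neg]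

theorem integral_isoGaussian_smul_sub (hs : 0 < s) (x : E) :
    ∫ y, isoGaussian s y • (x - y) = x := by
  simp_rw [smul_sub]
  rw [integral_sub ((integrable_isoGaussian hs).smul_const x) (integrable_isoGaussian_smul_self hs),
    integral_smul_const, integral_isoGaussian hs, one_smul, integral_isoGaussian_smul_self,
    sub_zero]

theorem integral_isoGaussian_smul_comp_sub_sub (hs : 0 < s) {F : E → E} {x : E}
    (hF : Integrable (fun y => isoGaussian s y • (F (x - y) - (x - y)))) :
    ∫ y, isoGaussian s y • (F (x - y) - (x - y)) = (∫ y, isoGaussian s y • F (x - y)) - x := by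
  have hlin : Integrable (fun y => isoGaussian s y • (x - y)) := by
    simp_rw [smul_sub]
    exact ((integrable_isoGaussian hs).smul_const x).sub (integrable_isoGaussian_smul_self hs)
  have hF' : Integrable (fun y => isoGaussian s y • F (x - y)) := by
    refine (hF.add hlin).congr (ae_of_all _ fun y => ?_)
    simp only [Pi.add_apply, ← smul_add, sub_add_cancel]
  simp_rw [smul_sub _ (F _)]
  rw [integral_sub hF' hlin, integral_isoGaussian_smul_sub hs]

end Gaussian

section GradientIntegral

variable {E : Type*} [NormedAddCommGroup E] [InnerProductSpace ℝ E] [CompleteSpace E]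

theorem hasGradientAt_integral_of_dominated_of_gradient_le {α : Type*} [MeasurableSpace α]
    {ν : Measure α} {F : E → α → ℝ} {G : E → α → E} {x₀ : E} {U : Set E} {bound : α → ℝ}
    (hU : U ∈ 𝓝 x₀) (hF_meas : ∀ᶠ x in 𝓝 x₀, AEStronglyMeasurable (F x) ν)
    (hF_int : Integrable (F x₀) ν) (hG_meas : AEStronglyMeasurable (G x₀) ν)
    (h_bound : ∀ᵐ a ∂ν, ∀ x ∈ U, ‖G x a‖ ≤ bound a) (bound_integrable : Integrable bound ν)
    (h_diff : ∀ᵐ a ∂ν, ∀ x ∈ U, HasGradientAt (F · a) (G x a) x) :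
    HasGradientAt (fun x => ∫ a, F x a ∂ν) (∫ a, G x₀ a ∂ν) x₀ := by
  have hG_int : Integrable (G x₀) ν :=
    bound_integrable.mono' hG_meas (h_bound.mono fun a ha => ha x₀ (mem_of_mem_nhds hU))
  rw [hasGradientAt_iff_hasFDerivAt]
  change HasFDerivAt _ (innerSL ℝ (∫ a, G x₀ a ∂ν)) x₀
  rw [← (innerSL ℝ).integral_comp_comm hG_int]
  exact hasFDerivAt_integral_of_dominated_of_fderiv_le hU hF_meas hF_int
    ((innerSL ℝ).continuous.comp_aestronglyMeasurable hG_meas)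
    (h_bound.mono fun a ha x hx => by simpa using ha x hx) bound_integrable h_diff

variable [MeasurableSpace E] [BorelSpace E]

theorem measurable_of_forall_hasGradientAt {φ : E → ℝ} {ψ : E → E}
    (h : ∀ x, HasGradientAt φ (ψ x) x) : Measurable ψ := by
  rw [← gradient_eq h]
  exact (toDual ℝ E).symm.continuous.measurable.comp (measurable_fderiv ℝ φ)

end GradientIntegral

section Posterior

variable {E : Type*} [NormedAddCommGroup E] [InnerProductSpace ℝ E] {Z : Type*} [MeasurableSpace Z]

noncomputable def marginalDensity (π : Measure Z) (μ : Z → E) (s : ℝ) (x : E) : ℝ :=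
  ∫ z, isoGaussian s (x - μ z) ∂π

noncomputable def posteriorMean [CompleteSpace E] (π : Measure Z) (μ : Z → E) (s : ℝ) (x : E) : E :=
  (marginalDensity π μ s x)⁻¹ • ∫ z, isoGaussian s (x - μ z) • μ z ∂π

variable {π : Measure Z} [IsFiniteMeasure π] {μ : Z → E} {s : ℝ}

theorem integrable_isoGaussian_sub (hs : 0 < s) (hμ : AEStronglyMeasurable μ π) (x : E) :
    Integrable (fun z => isoGaussian s (x - μ z)) π :=
  (integrable_const (isoGaussian s (0 : E))).mono'
    (continuous_isoGaussian.comp_aestronglyMeasurable (aestronglyMeasurable_const.sub hμ))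
    (ae_of_all _ fun z => by
      rw [Real.norm_of_nonneg (isoGaussian_pos hs _).le]
      exact isoGaussian_le_isoGaussian_zero hs _)

theorem integrable_isoGaussian_sub_smul_sub (hs : 0 < s) (hμ : AEStronglyMeasurable μ π)
    (x : E) : Integrable (fun z => isoGaussian s (x - μ z) • (μ z - x)) π :=
  (integrable_const (√s * isoGaussian s (0 : E))).mono'
    ((integrable_isoGaussian_sub hs hμ x).aestronglyMeasurable.smul
      (hμ.sub aestronglyMeasurable_const))
    (ae_of_all _ fun z => by
      rw [norm_smul, Real.norm_of_nonneg (isoGaussian_pos hs _).le, norm_sub_rev, mul_comm]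
      exact norm_mul_isoGaussian_le hs _)

theorem marginalDensity_pos [NeZero π] (hs : 0 < s) (hμ : AEStronglyMeasurable μ π) (x : E) :
    0 < marginalDensity π μ s x := by
  rw [marginalDensity, integral_pos_iff_support_of_nonneg
    (fun z => (isoGaussian_pos hs _).le) (integrable_isoGaussian_sub hs hμ x)]
  simp [Function.support, (isoGaussian_pos hs _).ne', NeZero.ne π]

variable [CompleteSpace E]

theorem hasGradientAt_marginalDensity (hs : 0 < s) (hμ : AEStronglyMeasurable μ π) (x : E) :
    HasGradientAt (marginalDensity π μ s)
      (s⁻¹ • ∫ z, isoGaussian s (x - μ z) • (μ z - x) ∂π) x := by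
  rw [← integral_smul]
  refine hasGradientAt_integral_of_dominated_of_gradient_le (U := Set.univ)
    (G := fun y z => s⁻¹ • isoGaussian s (y - μ z) • (μ z - y))
    (bound := fun _ => s⁻¹ * (√s * isoGaussian s (0 : E))) Filter.univ_mem
    (.of_forall fun x => (integrable_isoGaussian_sub hs hμ x).aestronglyMeasurable)
    (integrable_isoGaussian_sub hs hμ x)
    ((integrable_isoGaussian_sub_smul_sub hs hμ x).aestronglyMeasurable.const_smul _)
    (ae_of_all _ fun z y _ => ?_) (integrable_const _)
    (ae_of_all _ fun z y _ => ?_)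
  · rw [norm_smul, Real.norm_of_nonneg (inv_nonneg.2 hs.le), norm_smul,
      Real.norm_of_nonneg (isoGaussian_pos hs _).le, norm_sub_rev, mul_comm (isoGaussian s _)]
    exact mul_le_mul_of_nonneg_left (norm_mul_isoGaussian_le hs _) (inv_nonneg.2 hs.le)
  · simpa only [smul_smul] using hasGradientAt_isoGaussian_sub (μ z) y

theorem hasGradientAt_log_marginalDensity [NeZero π] (hs : 0 < s) (hμ : AEStronglyMeasurable μ π)
    (x : E) :
    HasGradientAt (fun x => Real.log (marginalDensity π μ s x))
      (s⁻¹ • (posteriorMean π μ s x - x)) x := by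
  have hp := (marginalDensity_pos hs hμ x).ne'
  have hcenter : ∫ z, isoGaussian s (x - μ z) • (μ z - x) ∂π
      = (∫ z, isoGaussian s (x - μ z) • μ z ∂π) - marginalDensity π μ s x • x := by
    have hlin := (integrable_isoGaussian_sub hs hμ x).smul_const x
    have hμ_int : Integrable (fun z => isoGaussian s (x - μ z) • μ z) π := by
      refine ((integrable_isoGaussian_sub_smul_sub hs hμ x).add hlin).congr
        (ae_of_all _ fun z => ?_)
      simp only [Pi.add_apply, ← smul_add, sub_add_cancel]
    simp_rw [smul_sub]
    rw [integral_sub hμ_int hlin, integral_smul_const, marginalDensity]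
  have h := ((hasGradientAt_marginalDensity hs hμ x).hasFDerivAt.log hp)
  rw [← map_smul, hcenter, smul_comm, smul_sub, smul_smul, inv_mul_cancel₀ hp, one_smul] at h
  exact h

end Posterior

section Smoothing

variable {E : Type*} [NormedAddCommGroup E] [InnerProductSpace ℝ E]
  [SecondCountableTopology E] [MeasurableSpace E] [BorelSpace E] {ν : Measure E} {w h : E → ℝ}

theorem integrable_smul_comp_sub {ψ : E → E} (hψ : Measurable ψ) (hw : AEStronglyMeasurable w ν)
    (hw0 : 0 ≤ w) (hh : Integrable (fun y => h y * w y) ν) {x : E}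
    (hb : ∀ y, ‖ψ (x - y)‖ ≤ h y) : Integrable (fun y => w y • ψ (x - y)) ν :=
  hh.mono' (hw.smul (hψ.comp (measurable_const.sub measurable_id)).aestronglyMeasurable)
    (ae_of_all _ fun y => by
      rw [norm_smul, Real.norm_of_nonneg (hw0 y), mul_comm]
      exact mul_le_mul_of_nonneg_right (hb y) (hw0 y))

theorem hasGradientAt_integral_comp_sub_mul [CompleteSpace E] {φ : E → ℝ} {ψ : E → E} {x₀ : E}
    {U : Set E}
    (hφ : ∀ u, HasGradientAt φ (ψ u) u) (hw : AEStronglyMeasurable w ν) (hw0 : 0 ≤ w)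
    (hU : U ∈ 𝓝 x₀) (hh : Integrable (fun y => h y * w y) ν)
    (hb : ∀ x ∈ U, ∀ y, |φ (x - y)| ≤ h y ∧ ‖ψ (x - y)‖ ≤ h y) :
    HasGradientAt (fun x => ∫ y, φ (x - y) * w y ∂ν) (∫ y, w y • ψ (x₀ - y) ∂ν) x₀ := by
  have hφc : Continuous φ := continuous_iff_continuousAt.2 fun u => (hφ u).continuousAt
  have hφm : ∀ x, AEStronglyMeasurable (fun y => φ (x - y) * w y) ν := fun x =>
    (hφc.comp (continuous_const.sub continuous_id)).aestronglyMeasurable.mul hw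
  have hx₀ := mem_of_mem_nhds hU
  refine hasGradientAt_integral_of_dominated_of_gradient_le (G := fun x y => w y • ψ (x - y))
    hU (.of_forall hφm) ?_
    (integrable_smul_comp_sub (measurable_of_forall_hasGradientAt hφ) hw hw0 hh
      fun y => (hb x₀ hx₀ y).2).aestronglyMeasurable
    (ae_of_all _ fun y x hx => ?_) hh (ae_of_all _ fun y x _ => ?_)
  · refine hh.mono' (hφm x₀) (ae_of_all _ fun y => ?_)
    rw [norm_mul, Real.norm_eq_abs, Real.norm_of_nonneg (hw0 y)]
    exact mul_le_mul_of_nonneg_right (hb x₀ hx₀ y).1 (hw0 y)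
  · rw [norm_smul, Real.norm_of_nonneg (hw0 y), mul_comm]
    exact mul_le_mul_of_nonneg_right (hb x hx y).2 (hw0 y)
  · have := ((hφ (x - y)).hasFDerivAt.comp x ((hasFDerivAt_id x).sub_const y)).mul_const (w y)
    rw [hasGradientAt_iff_hasFDerivAt, map_smul]
    simpa using this

end Smoothing

theorem hasGradientAt_integral_log_marginalDensity_mul_isoGaussian {E : Type*}
    [NormedAddCommGroup E] [InnerProductSpace ℝ E] [FiniteDimensional ℝ E] [MeasurableSpace E]
    [BorelSpace E] {Z : Type*} [MeasurableSpace Z] {π : Measure Z} [IsFiniteMeasure π] [NeZero π]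
    {μ : Z → E} {s t : ℝ} (hμ : AEStronglyMeasurable μ π) (hs : 0 < s) (ht : 0 < t)
    {x : E} {U : Set E} {h : E → ℝ} (hU : U ∈ 𝓝 x)
    (hh : Integrable (fun y => h y * isoGaussian t y))
    (hb : ∀ x ∈ U, ∀ y, |Real.log (marginalDensity π μ s (x - y))| ≤ h y ∧
      ‖posteriorMean π μ s (x - y) - (x - y)‖ / s ≤ h y) :
    HasGradientAt (fun x => ∫ y, Real.log (marginalDensity π μ s (x - y)) * isoGaussian t y)
      (s⁻¹ • ((∫ y, isoGaussian t y • posteriorMean π μ s (x - y)) - x)) x := by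
  have hψ := hasGradientAt_log_marginalDensity hs hμ
  have hw : AEStronglyMeasurable (isoGaussian t : E → ℝ) :=
    continuous_isoGaussian.aestronglyMeasurable
  have hw0 : 0 ≤ (isoGaussian t : E → ℝ) := fun y => (isoGaussian_pos ht y).le
  have hb' : ∀ x ∈ U, ∀ y, |Real.log (marginalDensity π μ s (x - y))| ≤ h y ∧
      ‖s⁻¹ • (posteriorMean π μ s (x - y) - (x - y))‖ ≤ h y := by
    intro x hx y
    rw [norm_smul, norm_inv, Real.norm_of_nonneg hs.le, inv_mul_eq_div]
    exact hb x hx y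
  have hint := integrable_smul_comp_sub (measurable_of_forall_hasGradientAt hψ) hw hw0 hh
    fun y => (hb' x (mem_of_mem_nhds hU) y).2
  simp_rw [smul_comm (isoGaussian _ _) s⁻¹] at hint
  convert hasGradientAt_integral_comp_sub_mul hψ hw hw0 hU hh hb' using 1
  simp_rw [smul_comm (isoGaussian _ _) s⁻¹]
  rw [integral_smul, integral_isoGaussian_smul_comp_sub_sub ht
    ((integrable_fun_smul_iff (inv_ne_zero hs.ne') _).1 hint)]

theorem gradient_smoothed_vae_log_density_general
    (n : ℕ) {Z : Type*} [MeasurableSpace Z]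
    (π : Measure Z) [IsProbabilityMeasure π]
    (μ : Z → EuclideanSpace ℝ (Fin n)) (hμ : Measurable μ)
    (σ τ : ℝ) (hσ : 0 < σ) (hτ : 0 < τ)
    (f : EuclideanSpace ℝ (Fin n) → Z → ℝ)
    (hf : ∀ x z, f x z =
      (2 * Real.pi * σ ^ 2) ^ (-(n : ℝ) / 2) *
        Real.exp (-‖x - μ z‖ ^ 2 / (2 * σ ^ 2)))
    (p : EuclideanSpace ℝ (Fin n) → ℝ)
    (hp : ∀ x, p x = ∫ z, f x z ∂π)
    (m : EuclideanSpace ℝ (Fin n) → EuclideanSpace ℝ (Fin n))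
    (hm : ∀ x, m x = (p x)⁻¹ • ∫ z, f x z • μ z ∂π)
    (g : EuclideanSpace ℝ (Fin n) → ℝ)
    (hg : ∀ y, g y =
      (2 * Real.pi * τ ^ 2) ^ (-(n : ℝ) / 2) *
        Real.exp (-‖y‖ ^ 2 / (2 * τ ^ 2)))
    (Lτ : EuclideanSpace ℝ (Fin n) → ℝ)
    (hLτ : ∀ x, Lτ x = ∫ y, Real.log (p (x - y)) * g y)
    (hdom : ∀ x₀ : EuclideanSpace ℝ (Fin n), ∃ U ∈ nhds x₀,
      ∃ h : EuclideanSpace ℝ (Fin n) → ℝ,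
        Integrable (fun y => h y * g y) ∧
        ∀ x ∈ U, ∀ y, |Real.log (p (x - y))| ≤ h y ∧
          ‖m (x - y) - (x - y)‖ / σ ^ 2 ≤ h y) :
    Differentiable ℝ Lτ ∧
    ∀ x, gradient Lτ x = (σ ^ 2)⁻¹ • ((∫ y, g y • m (x - y)) - x) := by
  have hk : ∀ (s : ℝ) (v : EuclideanSpace ℝ (Fin n)),
      (2 * Real.pi * s) ^ (-(n : ℝ) / 2) * Real.exp (-‖v‖ ^ 2 / (2 * s)) = isoGaussian s v := by
    intro s v; rw [isoGaussian, finrank_euclideanSpace_fin]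
  obtain rfl : f = fun x z => isoGaussian (σ ^ 2) (x - μ z) := by funext x z; rw [hf, hk]
  obtain rfl : p = marginalDensity π μ (σ ^ 2) := funext hp
  obtain rfl : m = posteriorMean π μ (σ ^ 2) := funext hm
  obtain rfl : g = isoGaussian (τ ^ 2) := by funext y; rw [hg, hk]
  have hgrad : ∀ x, HasGradientAt Lτ ((σ ^ 2)⁻¹ •
      ((∫ y, isoGaussian (τ ^ 2) y • posteriorMean π μ (σ ^ 2) (x - y)) - x)) x := fun x => by
    obtain ⟨U, hU, h, hh, hb⟩ := hdom x
    rw [funext hLτ]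
    exact hasGradientAt_integral_log_marginalDensity_mul_isoGaussian hμ.aestronglyMeasurable
      (by positivity) (by positivity) hU hh hb
  exact ⟨fun x => (hgrad x).differentiableAt, fun x => (hgrad x).gradient⟩

/-- **Gradient of the smoothed VAE log-density.** With the setup of Proposition 1
(`f(x,z) = (2πσ²)^{-n/2} exp(-‖x-μ(z)‖²/(2σ²))`, marginal `p(x) = ∫ f(x,z) dπ(z)`,
posterior mean `m(x) = (∫ μ(z) f(x,z) dπ(z))/p(x)`), and the centered Gaussian
kernel `g(y) = (2πτ²)^{-n/2} exp(-‖y‖²/(2τ²))` on ℝⁿ, the smoothed log-density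
`L_τ(x) = ∫ log p(x-y) g(y) dy` (under local domination of `|log p(x-y)|` and
`‖m(x-y)-(x-y)‖/σ²` by a `g`-integrable function) is differentiable with
`∇L_τ(x) = σ⁻² (∫ m(x-y) g(y) dy − x)`. -/
theorem gradient_smoothed_vae_log_density
    (n : ℕ) (hn : 0 < n) {Z : Type*} [MeasurableSpace Z]
    (π : Measure Z) [IsProbabilityMeasure π]
    (μ : Z → EuclideanSpace ℝ (Fin n)) (hμ : Measurable μ)
    (σ τ : ℝ) (hσ : 0 < σ) (hτ : 0 < τ)
    (f : EuclideanSpace ℝ (Fin n) → Z → ℝ)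
    (hf : ∀ x z, f x z =
      (2 * Real.pi * σ ^ 2) ^ (-(n : ℝ) / 2) *
        Real.exp (-‖x - μ z‖ ^ 2 / (2 * σ ^ 2)))
    (p : EuclideanSpace ℝ (Fin n) → ℝ)
    (hp : ∀ x, p x = ∫ z, f x z ∂π)
    (m : EuclideanSpace ℝ (Fin n) → EuclideanSpace ℝ (Fin n))
    (hm : ∀ x, m x = (p x)⁻¹ • ∫ z, f x z • μ z ∂π)
    (g : EuclideanSpace ℝ (Fin n) → ℝ)
    (hg : ∀ y, g y =
      (2 * Real.pi * τ ^ 2) ^ (-(n : ℝ) / 2) *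
        Real.exp (-‖y‖ ^ 2 / (2 * τ ^ 2)))
    (Lτ : EuclideanSpace ℝ (Fin n) → ℝ)
    (hLτ : ∀ x, Lτ x = ∫ y, Real.log (p (x - y)) * g y)
    (hdom : ∀ x₀ : EuclideanSpace ℝ (Fin n), ∃ U ∈ nhds x₀,
      ∃ h : EuclideanSpace ℝ (Fin n) → ℝ,
        Integrable (fun y => h y * g y) ∧
        ∀ x ∈ U, ∀ y, |Real.log (p (x - y))| ≤ h y ∧
          ‖m (x - y) - (x - y)‖ / σ ^ 2 ≤ h y) :
    Differentiable ℝ Lτ ∧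
    ∀ x, gradient Lτ x = (σ ^ 2)⁻¹ • ((∫ y, g y • m (x - y)) - x) :=
  gradient_smoothed_vae_log_density_general n π μ hμ σ τ hσ hτ f hf p hp m hm g hg Lτ hLτ hdom
end
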